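/- Let n ≥ 3 and let R : (Fin n)⁴ → ℝ be a tensor with Riemann symmetries: R_{abcd} = −R_{bacd} = −R_{abdc}, R_{abcd} = R_{cdab}, and R_{abcd} + R_{acdb} + R_{adbc} = 0. Define the Ricci tensor Ric_{ab} = Σ_{c,d} η^{cd} R_{cadb}, the Ricci scalar ℛ = Σ_{a,b} η^{ab} Ric_{ab}, and the Weyl tensor C_{abcd} = R_{abcd} − (1/(n−2))(η_{ac}Ric_{db} − η_{ad}Ric_{cb} − η_{bc}Ric_{da} + η_{bd}Ric_{ca}) + (ℛ/((n−1)(n−2)))(η_{ac}η_{db} − η_{ad}η_{cb}). Let u ∈ ℝⁿ be unit timelike and let ε ∈ {+1, −1}. Then θ_u·R = ε R if and only if both θ_u·C = ε C and θ_uᵀ Ric θ_u = ε Ric. (The Riemann tensor is purely electric, respectively purely magnetic, with respect to u if and only if both the Weyl and Ricci tensors are.) -/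

import Mathlib

open Matrix

noncomputable section

/-- The Minkowski metric `η = diag(-1, 1, …, 1)` on `ℝⁿ`. -/
def eta (n : ℕ) : Matrix (Fin n) (Fin n) ℝ :=
  Matrix.diagonal fun i => if i.val = 0 then (-1 : ℝ) else 1

/-- The reflection `θ_u = I + 2u(ηu)ᵀ` sending `u ↦ -u` and fixing `u^⊥`. -/
def theta {n : ℕ} (u : Fin n → ℝ) : Matrix (Fin n) (Fin n) ℝ :=
  1 + (2 : ℝ) • vecMulVec u ((eta n).mulVec u)

/-- The pullback action of a matrix `Λ` on rank-4 covariant tensors. -/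
def pull {n : ℕ} (Λ : Matrix (Fin n) (Fin n) ℝ)
    (R : Fin n → Fin n → Fin n → Fin n → ℝ) : Fin n → Fin n → Fin n → Fin n → ℝ :=
  fun a b c d => ∑ a', ∑ b', ∑ c', ∑ d',
    R a' b' c' d' * Λ a' a * Λ b' b * Λ c' c * Λ d' d

/-- The Ricci tensor `Ric_{ab} = η^{cd} R_{cadb}` of a Riemann candidate. -/
def ricci {n : ℕ} (R : Fin n → Fin n → Fin n → Fin n → ℝ) :
    Matrix (Fin n) (Fin n) ℝ :=
  Matrix.of fun a b => ∑ c, ∑ d, eta n c d * R c a d b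

/-- The Ricci scalar `ℛ = η^{ab} Ric_{ab}`. -/
def ricciScalar {n : ℕ} (R : Fin n → Fin n → Fin n → Fin n → ℝ) : ℝ :=
  ∑ a, ∑ b, eta n a b * ricci R a b

/-- The Weyl tensor of a Riemann candidate `R` in dimension `n`. -/
def weyl {n : ℕ} (R : Fin n → Fin n → Fin n → Fin n → ℝ) :
    Fin n → Fin n → Fin n → Fin n → ℝ :=
  fun a b c d =>
    R a b c d
      - (1 / ((n : ℝ) - 2)) *
          (eta n a c * ricci R d b - eta n a d * ricci R c b
            - eta n b c * ricci R d a + eta n b d * ricci R c a)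
      + (ricciScalar R / (((n : ℝ) - 1) * ((n : ℝ) - 2))) *
          (eta n a c * eta n d b - eta n a d * eta n c b)

/-!
The Weyl tensor is `C = R - η ⊙ P`, where `P` is the Schouten tensor built from `Ric` and `⊙`
the Kulkarni–Nomizu product. Ricci contraction, `⊙` and `P` are linear and commute with
pullback by any Lorentz matrix `Λ`, and `θ_u` is one. Hence `Λ · R = Λ · C + η ⊙ P(Λᵀ Ric Λ)`.
If `Λ · R = ε R`, contracting gives `Λᵀ Ric Λ = ε Ric`, and then `Λ · C = ε C`; conversely the
two conditions add up to `Λ · R = ε (C + η ⊙ P(Ric)) = ε R`.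
-/

section Minkowski
variable {n : ℕ}

lemma eta_transpose : (eta n)ᵀ = eta n := diagonal_transpose _

lemma eta_comm (a b : Fin n) : eta n a b = eta n b a := by
  rw [← transpose_apply (eta n), eta_transpose]

lemma eta_mul_eta : eta n * eta n = 1 := by
  rw [eta, diagonal_mul_diagonal, ← diagonal_one]
  congr 1; ext i; split_ifs <;> norm_num

lemma mul_eta_mul_transpose_of_transpose_mul_eta_mul {Λ : Matrix (Fin n) (Fin n) ℝ}
    (hΛ : Λᵀ * eta n * Λ = eta n) : Λ * eta n * Λᵀ = eta n := by
  have h : Λ * (eta n * Λᵀ * eta n) = 1 := by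
    rw [mul_eq_one_comm, Matrix.mul_assoc, Matrix.mul_assoc, ← Matrix.mul_assoc Λᵀ, hΛ, eta_mul_eta]
  calc Λ * eta n * Λᵀ = Λ * (eta n * Λᵀ * eta n) * eta n := by
        simp only [Matrix.mul_assoc, eta_mul_eta, Matrix.mul_one]
    _ = eta n := by rw [h, Matrix.one_mul]

lemma theta_transpose_mul_eta_mul_theta {u : Fin n → ℝ} (hu : u ⬝ᵥ (eta n).mulVec u = -1) :
    (theta u)ᵀ * eta n * theta u = eta n := by
  unfold theta
  set v := eta n *ᵥ u
  have hvu : v ⬝ᵥ u = -1 := by rw [dotProduct_comm, hu]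
  have hη_uv : eta n * vecMulVec u v = vecMulVec v v := mul_vecMulVec _ _ _
  have hvu_η : vecMulVec v u * eta n = vecMulVec v v := by
    rw [vecMulVec_mul, ← mulVec_transpose, eta_transpose]
  have hvv_uv : vecMulVec v v * vecMulVec u v = -vecMulVec v v := by
    rw [vecMulVec_mul_vecMulVec, hvu, neg_one_smul, vecMulVec_neg]
  simp only [transpose_add, transpose_one, transpose_smul, transpose_vecMulVec,
    Matrix.add_mul, Matrix.mul_add, Matrix.smul_mul, Matrix.mul_smul, Matrix.one_mul,
    Matrix.mul_one, hη_uv, hvu_η, hvv_uv]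
  module

def etaTrace (S : Matrix (Fin n) (Fin n) ℝ) : ℝ := ∑ a, ∑ b, eta n a b * S a b

lemma etaTrace_eq_trace (S : Matrix (Fin n) (Fin n) ℝ) : etaTrace S = trace (eta n * Sᵀ) := by
  simp [etaTrace, trace, mul_apply]

lemma etaTrace_smul (c : ℝ) (S : Matrix (Fin n) (Fin n) ℝ) :
    etaTrace (c • S) = c * etaTrace S := by
  simp only [etaTrace_eq_trace, transpose_smul, Matrix.mul_smul, trace_smul, smul_eq_mul]

lemma etaTrace_transpose_mul_mul {Λ : Matrix (Fin n) (Fin n) ℝ} (hΛ : Λ * eta n * Λᵀ = eta n)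
    (S : Matrix (Fin n) (Fin n) ℝ) : etaTrace (Λᵀ * S * Λ) = etaTrace S := by
  rw [etaTrace_eq_trace, etaTrace_eq_trace, transpose_mul, transpose_mul, transpose_transpose,
    ← Matrix.mul_assoc, ← Matrix.mul_assoc, trace_mul_comm, ← Matrix.mul_assoc,
    ← Matrix.mul_assoc, hΛ]

end Minkowski

section Pullback
variable {n : ℕ} (Λ : Matrix (Fin n) (Fin n) ℝ)

lemma transpose_mul_mul_apply (M : Matrix (Fin n) (Fin n) ℝ) (a c : Fin n) :
    (Λᵀ * M * Λ) a c = ∑ x, ∑ z, M x z * Λ x a * Λ z c := by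
  simp only [mul_apply, transpose_apply, Finset.sum_mul]
  rw [Finset.sum_comm]
  exact Finset.sum_congr rfl fun z _ => Finset.sum_congr rfl fun x _ => by ring

lemma sum_sum_comm_pairs {ι β : Type*} [Fintype ι] [AddCommMonoid β] (f : ι → ι → ι → ι → β) :
    ∑ a, ∑ b, ∑ c, ∑ d, f a b c d = ∑ c, ∑ d, ∑ a, ∑ b, f a b c d := by
  calc _ = ∑ a, ∑ c, ∑ d, ∑ b, f a b c d := Finset.sum_congr rfl fun a _ => by
        rw [Finset.sum_comm]; exact Finset.sum_congr rfl fun c _ => Finset.sum_comm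
    _ = _ := by rw [Finset.sum_comm]; exact Finset.sum_congr rfl fun c _ => Finset.sum_comm

lemma pull_apply_eq_sum (T : Fin n → Fin n → Fin n → Fin n → ℝ) (a b c d : Fin n) :
    pull Λ T a b c d =
      ∑ b', ∑ d', (Λᵀ * of (fun a' c' => T a' b' c' d') * Λ) a c * Λ b' b * Λ d' d := by
  simp only [pull, transpose_mul_mul_apply, of_apply, Finset.sum_mul]
  conv_rhs => rw [sum_sum_comm_pairs]
  refine Finset.sum_congr rfl fun _ _ => ?_
  rw [Finset.sum_comm]
  exact Finset.sum_congr rfl fun _ _ => Finset.sum_congr rfl fun _ _ =>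
    Finset.sum_congr rfl fun _ _ => by ring

lemma pull_add (T T' : Fin n → Fin n → Fin n → Fin n → ℝ) :
    pull Λ (T + T') = pull Λ T + pull Λ T' := by
  ext a b c d
  simp only [pull, Pi.add_apply, add_mul, Finset.sum_add_distrib]

lemma pull_sub (T T' : Fin n → Fin n → Fin n → Fin n → ℝ) :
    pull Λ (T - T') = pull Λ T - pull Λ T' := by
  ext a b c d
  simp only [pull, Pi.sub_apply, sub_mul, Finset.sum_sub_distrib]

lemma pull_swap_left (T : Fin n → Fin n → Fin n → Fin n → ℝ) :
    pull Λ (fun a b c d => T b a c d) = fun a b c d => pull Λ T b a c d := by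
  ext a b c d
  simp only [pull]
  rw [Finset.sum_comm]
  exact Finset.sum_congr rfl fun _ _ => Finset.sum_congr rfl fun _ _ =>
    Finset.sum_congr rfl fun _ _ => Finset.sum_congr rfl fun _ _ => by ring

lemma pull_swap_right (T : Fin n → Fin n → Fin n → Fin n → ℝ) :
    pull Λ (fun a b c d => T a b d c) = fun a b c d => pull Λ T a b d c := by
  ext a b c d
  simp only [pull]
  refine Finset.sum_congr rfl fun _ _ => Finset.sum_congr rfl fun _ _ => ?_
  rw [Finset.sum_comm]
  exact Finset.sum_congr rfl fun _ _ => Finset.sum_congr rfl fun _ _ => by ring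

lemma pull_mul (h k : Matrix (Fin n) (Fin n) ℝ) :
    pull Λ (fun a b c d => h a c * k d b) =
      fun a b c d => (Λᵀ * h * Λ) a c * (Λᵀ * k * Λ) d b := by
  ext a b c d
  have hsmul : ∀ b' d', of (fun a' c' => h a' c' * k d' b') = k d' b' • h := fun b' d' => by
    ext; simp [mul_comm]
  simp only [pull_apply_eq_sum, hsmul, Matrix.mul_smul, Matrix.smul_mul, Matrix.smul_apply,
    smul_eq_mul, transpose_mul_mul_apply Λ k d b, Finset.mul_sum]
  rw [Finset.sum_comm]
  exact Finset.sum_congr rfl fun _ _ => Finset.sum_congr rfl fun _ _ => by ring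

end Pullback

section Curvature
variable {n : ℕ}

/-- Index placement follows `weyl`; for symmetric `k` this is the usual Kulkarni–Nomizu product. -/
def kulkarniNomizu (h k : Matrix (Fin n) (Fin n) ℝ) : Fin n → Fin n → Fin n → Fin n → ℝ :=
  fun a b c d => h a c * k d b - h a d * k c b - h b c * k d a + h b d * k c a

lemma kulkarniNomizu_smul_right (h k : Matrix (Fin n) (Fin n) ℝ) (r : ℝ) :
    kulkarniNomizu h (r • k) = r • kulkarniNomizu h k := by
  ext a b c d
  simp only [kulkarniNomizu, Matrix.smul_apply, Pi.smul_apply, smul_eq_mul]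
  ring

lemma pull_kulkarniNomizu (Λ h k : Matrix (Fin n) (Fin n) ℝ) :
    pull Λ (kulkarniNomizu h k) = kulkarniNomizu (Λᵀ * h * Λ) (Λᵀ * k * Λ) := by
  set O : Fin n → Fin n → Fin n → Fin n → ℝ := fun a b c d => h a c * k d b
  have hO : kulkarniNomizu h k = O - (fun a b c d => O a b d c) - (fun a b c d => O b a c d)
      + (fun a b c d => O b a d c) := rfl
  rw [hO, pull_add, pull_sub, pull_sub, pull_swap_left Λ (fun a b c d => O a b d c),
    pull_swap_left Λ O, pull_swap_right Λ O, pull_mul]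
  rfl

def schouten (S : Matrix (Fin n) (Fin n) ℝ) : Matrix (Fin n) (Fin n) ℝ :=
  (1 / ((n : ℝ) - 2)) • (S - (etaTrace S / (2 * ((n : ℝ) - 1))) • eta n)

lemma schouten_smul (r : ℝ) (S : Matrix (Fin n) (Fin n) ℝ) :
    schouten (r • S) = r • schouten S := by
  rw [schouten, schouten, etaTrace_smul]
  module

lemma transpose_mul_schouten_mul {Λ : Matrix (Fin n) (Fin n) ℝ} (hΛ : Λᵀ * eta n * Λ = eta n)
    (S : Matrix (Fin n) (Fin n) ℝ) : Λᵀ * schouten S * Λ = schouten (Λᵀ * S * Λ) := by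
  simp only [schouten, Matrix.mul_smul, Matrix.smul_mul, Matrix.mul_sub, Matrix.sub_mul, hΛ,
    etaTrace_transpose_mul_mul (mul_eta_mul_transpose_of_transpose_mul_eta_mul hΛ)]

lemma weyl_eq_sub (R : Fin n → Fin n → Fin n → Fin n → ℝ) :
    weyl R = R - kulkarniNomizu (eta n) (schouten (ricci R)) := by
  ext a b c d
  have hscalar : etaTrace (ricci R) = ricciScalar R := rfl
  simp only [weyl, kulkarniNomizu, schouten, hscalar, Pi.sub_apply, Matrix.smul_apply,
    Matrix.sub_apply, smul_eq_mul, div_eq_mul_inv, mul_inv]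
  rw [eta_comm d a, eta_comm c a, eta_comm b d, eta_comm b c]
  ring

lemma ricci_smul (r : ℝ) (R : Fin n → Fin n → Fin n → Fin n → ℝ) :
    ricci (r • R) = r • ricci R := by
  ext a b
  simp only [ricci, of_apply, Pi.smul_apply, Matrix.smul_apply, smul_eq_mul, Finset.mul_sum]
  exact Finset.sum_congr rfl fun _ _ => Finset.sum_congr rfl fun _ _ => by ring

lemma ricci_pull {Λ : Matrix (Fin n) (Fin n) ℝ} (hΛ : Λ * eta n * Λᵀ = eta n)
    (R : Fin n → Fin n → Fin n → Fin n → ℝ) : ricci (pull Λ R) = Λᵀ * ricci R * Λ := by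
  ext a b
  let M : Fin n → Fin n → Matrix (Fin n) (Fin n) ℝ := fun y w => of fun x z => R x y z w
  calc ricci (pull Λ R) a b
      = ∑ c, ∑ d, eta n c d * ∑ y, ∑ w, (Λᵀ * M y w * Λ) c d * Λ y a * Λ w b := by
        simp only [ricci, of_apply, pull_apply_eq_sum, M]
    _ = ∑ y, ∑ w, etaTrace (Λᵀ * M y w * Λ) * Λ y a * Λ w b := by
        simp only [etaTrace, Finset.mul_sum, Finset.sum_mul]
        rw [sum_sum_comm_pairs]
        exact Finset.sum_congr rfl fun _ _ => Finset.sum_congr rfl fun _ _ =>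
          Finset.sum_congr rfl fun _ _ => Finset.sum_congr rfl fun _ _ => by ring
    _ = (Λᵀ * ricci R * Λ) a b := by
        simp only [etaTrace_transpose_mul_mul hΛ, transpose_mul_mul_apply]
        rfl

theorem pull_eq_smul_iff_weyl_and_ricci {Λ : Matrix (Fin n) (Fin n) ℝ}
    (hΛ : Λᵀ * eta n * Λ = eta n) (R : Fin n → Fin n → Fin n → Fin n → ℝ) (ε : ℝ) :
    pull Λ R = ε • R ↔ pull Λ (weyl R) = ε • weyl R ∧ Λᵀ * ricci R * Λ = ε • ricci R := by
  have hpull : pull Λ R =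
      pull Λ (weyl R) + kulkarniNomizu (eta n) (schouten (Λᵀ * ricci R * Λ)) := by
    conv_lhs =>
      rw [← sub_add_cancel R (kulkarniNomizu (eta n) (schouten (ricci R))), ← weyl_eq_sub]
    rw [pull_add, pull_kulkarniNomizu, hΛ, transpose_mul_schouten_mul hΛ]
  constructor
  · intro h
    have hric : Λᵀ * ricci R * Λ = ε • ricci R := by
      rw [← ricci_pull (mul_eta_mul_transpose_of_transpose_mul_eta_mul hΛ), h, ricci_smul]
    rw [hric, schouten_smul, kulkarniNomizu_smul_right, h] at hpull
    rw [eq_sub_of_add_eq hpull.symm, weyl_eq_sub, smul_sub]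
    exact ⟨rfl, hric⟩
  · rintro ⟨hW, hric⟩
    rw [hpull, hW, hric, schouten_smul, kulkarniNomizu_smul_right, ← smul_add, weyl_eq_sub,
      sub_add_cancel]

end Curvature

theorem stmt13_general {n : ℕ}
    (R : Fin n → Fin n → Fin n → Fin n → ℝ)
    (u : Fin n → ℝ) (hu : u ⬝ᵥ (eta n).mulVec u = -1)
    (ε : ℝ) :
    pull (theta u) R = (fun a b c d => ε * R a b c d) ↔
      (pull (theta u) (weyl R) = (fun a b c d => ε * weyl R a b c d) ∧
        (theta u)ᵀ * ricci R * theta u = ε • ricci R) :=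
  pull_eq_smul_iff_weyl_and_ricci (theta_transpose_mul_eta_mul_theta hu) R ε

/-- The Riemann tensor is purely electric (`ε = 1`), resp. purely magnetic (`ε = -1`),
with respect to a unit timelike `u` iff both the Weyl and Ricci tensors are. -/
theorem stmt13 {n : ℕ} (hn : 3 ≤ n)
    (R : Fin n → Fin n → Fin n → Fin n → ℝ)
    (hanti1 : ∀ a b c d, R b a c d = -R a b c d)
    (hanti2 : ∀ a b c d, R a b d c = -R a b c d)
    (hpair : ∀ a b c d, R c d a b = R a b c d)
    (hbianchi : ∀ a b c d, R a b c d + R a c d b + R a d b c = 0)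
    (u : Fin n → ℝ) (hu : u ⬝ᵥ (eta n).mulVec u = -1)
    (ε : ℝ) (hε : ε = 1 ∨ ε = -1) :
    pull (theta u) R = (fun a b c d => ε * R a b c d) ↔
      (pull (theta u) (weyl R) = (fun a b c d => ε * weyl R a b c d) ∧
        (theta u)ᵀ * ricci R * theta u = ε • ricci R) :=
  stmt13_general R u hu ε
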